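/- There exists no mechanism that is both nonempty and incentive compatible: for every (randomised) mechanism ℳ, if for every IKEP instance I whose compatibility graph contains at least one Γ-cycle the distribution ℳ(I) assigns probability 0 to the empty packing (nonemptiness), then ℳ is not incentive compatible. -/

import Mathlib

open scoped Classical

/-- An `n`-partitioned compatibility graph: a finite directed graph on a finite
set of natural-number vertices, without self-loops, whose vertex set is
partitioned into `n` nonempty countries. -/
structure PartGraph (n : ℕ) where
  verts : Finset ℕ
  arcs : Finset (ℕ × ℕ)
  arcs_mem : ∀ p ∈ arcs, p.1 ∈ verts ∧ p.2 ∈ verts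
  no_loops : ∀ v, (v, v) ∉ arcs
  country : ℕ → Fin n
  country_nonempty : ∀ i : Fin n, ∃ v ∈ verts, country v = i

/-- Cyclic access to the entries of a list. -/
def cyc (l : List ℕ) (k : ℕ) : ℕ := l.getD (k % l.length) 0

/-- `l` is a (directed) cycle of `G`: a cyclic sequence of at least two distinct
vertices, consecutive ones (cyclically) joined by arcs. -/
def IsCycle {n : ℕ} (G : PartGraph n) (l : List ℕ) : Prop :=
  2 ≤ l.length ∧ l.Nodup ∧ (∀ v ∈ l, v ∈ G.verts) ∧
    ∀ k < l.length, (cyc l k, cyc l (k + 1)) ∈ G.arcs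

/-- All vertices of `l` belong to country `i`. -/
def IsNationalTo {n : ℕ} (G : PartGraph n) (l : List ℕ) (i : Fin n) : Prop :=
  ∀ v ∈ l, G.country v = i

/-- A national cycle: all vertices in one country. -/
def IsNational {n : ℕ} (G : PartGraph n) (l : List ℕ) : Prop :=
  ∃ i, IsNationalTo G l i

/-- An international cycle: not national (equivalently, for cycles, it contains
an international arc). -/
def IsInternational {n : ℕ} (G : PartGraph n) (l : List ℕ) : Prop :=
  ¬ IsNational G l

/-- Position `k` (taken cyclically) is the start of a `V_i`-segment of `l`:
the vertex there is in country `i` but the cyclically preceding one is not. -/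
def segStart {n : ℕ} (G : PartGraph n) (l : List ℕ) (i : Fin n) (k : ℕ) : Prop :=
  G.country (cyc l k) = i ∧ G.country (cyc l (k + l.length - 1)) ≠ i

/-- The size of the run of consecutive (cyclic) positions of `l`, starting at
position `k`, whose vertices are in country `i`.  At a segment start this is
exactly the size of that `V_i`-segment. -/
noncomputable def runLen {n : ℕ} (G : PartGraph n) (l : List ℕ) (i : Fin n) (k : ℕ) : ℕ :=
  ((Finset.range l.length).filter
    fun j => ∀ j' ≤ j, G.country (cyc l (k + j')) = i).card

/-- The number of `V_i`-segments of the cycle `l`. -/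
noncomputable def numSegs {n : ℕ} (G : PartGraph n) (l : List ℕ) (i : Fin n) : ℕ :=
  ((Finset.range l.length).filter fun k => segStart G l i k).card

/-- A set `Γ` of country-specific parameters for `n` countries. -/
structure Params (n : ℕ) where
  icl : ℕ∞
  ncl : Fin n → ℕ∞
  iss : Fin n → ℕ∞
  isn : Fin n → ℕ∞
  icl_ne_one : icl ≠ 1
  ncl_ne_one : ∀ i, ncl i ≠ 1
  iss_pos : ∀ i, 1 ≤ iss i
  isn_pos : ∀ i, 1 ≤ isn i

/-- `l` is a `Γ`-cycle of `(G, 𝒱)`. -/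
def IsGammaCycle {n : ℕ} (G : PartGraph n) (Γ : Params n) (l : List ℕ) : Prop :=
  IsCycle G l ∧
    ((∃ i, IsNationalTo G l i ∧ (l.length : ℕ∞) ≤ Γ.ncl i) ∨
      (IsInternational G l ∧ (l.length : ℕ∞) ≤ Γ.icl ∧
        (∀ i, ∀ k < l.length, segStart G l i k → (runLen G l i k : ℕ∞) ≤ Γ.iss i) ∧
        (∀ i, (numSegs G l i : ℕ∞) ≤ Γ.isn i)))

/-- A cycle packing of `G`: a set of pairwise vertex-disjoint cycles. -/
def IsPacking {n : ℕ} (G : PartGraph n) (P : Finset (List ℕ)) : Prop :=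
  (∀ l ∈ P, IsCycle G l) ∧
    ∀ l ∈ P, ∀ l' ∈ P, l ≠ l' → ∀ v ∈ l, v ∉ l'

/-- The size of a cycle packing: total number of arcs (= vertices) of its cycles. -/
def packSize (P : Finset (List ℕ)) : ℕ := ∑ l ∈ P, l.length

/-- A `Γ`-cycle packing of `(G, 𝒱)`. -/
def IsGammaPackingG {n : ℕ} (G : PartGraph n) (Γ : Params n) (P : Finset (List ℕ)) : Prop :=
  IsPacking G P ∧ ∀ l ∈ P, IsGammaCycle G Γ l


/-- An IKEP instance `I = ⟨G, 𝒱, Γ⟩`. -/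
structure IKEP where
  n : ℕ
  npos : 1 ≤ n
  G : PartGraph n
  prm : Params n

/-- A `Γ`-cycle packing of the instance `I`. -/
def IsGammaPacking (I : IKEP) (P : Finset (List ℕ)) : Prop :=
  IsGammaPackingG I.G I.prm P

/-- The utility `u_i(C)` of country `i` from the cycle `C`: the number of arcs
of `C` entering country `i`, i.e. the number of vertices of `C` in country `i`. -/
noncomputable def cycUtil {n : ℕ} (G : PartGraph n) (i : Fin n) (l : List ℕ) : ℕ :=
  (l.filter fun v => G.country v = i).length

/-- The utility `u_i(𝒞)` of country `i` from a cycle packing. -/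
noncomputable def packUtil {n : ℕ} (G : PartGraph n) (i : Fin n) (P : Finset (List ℕ)) : ℕ :=
  ∑ l ∈ P, cycUtil G i l

/-- `opt(I)`: the maximum size of a `Γ`-cycle packing of `G`. -/
noncomputable def optSize (I : IKEP) : ℕ :=
  sSup {m | ∃ P, IsGammaPacking I P ∧ packSize P = m}

/-- `nat_i(I)`: the maximum size of a `Γ`-cycle packing of the subgraph
`G[V_i]` induced by country `i` (all its cycles are national, so the only
constraint from `Γ` is the national cycle limit `ncl i`). -/
noncomputable def natSize (I : IKEP) (i : Fin I.n) : ℕ :=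
  sSup {m | ∃ P, IsPacking I.G P ∧ (∀ l ∈ P, IsNationalTo I.G l i) ∧
    (∀ l ∈ P, (l.length : ℕ∞) ≤ I.prm.ncl i) ∧ packSize P = m}

/-- A (randomised) mechanism: for every IKEP instance it returns one `Γ`-cycle
packing according to a (finitely supported) probability distribution on the
set `𝒟_I` of all `Γ`-cycle packings of `G`. -/
structure Mechanism where
  dist : IKEP → (Finset (List ℕ) →₀ ℝ)
  nonneg : ∀ I P, 0 ≤ dist I P
  sum_one : ∀ I, ((dist I).sum fun _ p => p) = 1
  supp : ∀ I P, dist I P ≠ 0 → IsGammaPacking I P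

/-- The expected utility `U_i(ℳ(I))` of country `i`. -/
noncomputable def expUtil (M : Mechanism) (I : IKEP) (i : Fin I.n) : ℝ :=
  (M.dist I).sum fun P p => p * (packUtil I.G i P : ℝ)

/-- The expected social welfare `SW(ℳ(I)) = Σ_i U_i(ℳ(I))`: the expected size
of the returned packing. -/
noncomputable def sw (M : Mechanism) (I : IKEP) : ℝ :=
  (M.dist I).sum fun P p => p * (packSize P : ℝ)

/-- Individual rationality. -/
def IndRational (M : Mechanism) : Prop :=
  ∀ I : IKEP, ∀ i : Fin I.n, (natSize I i : ℝ) ≤ expUtil M I i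

/-- Efficiency. -/
def Efficient (M : Mechanism) : Prop :=
  ∀ I : IKEP, sw M I = (optSize I : ℝ)

/-- `Γ' ≤ᵢ Γ`: country `i` misreports by declaring (weakly) smaller
international segment size and segment number; all other parameters agree. -/
def ParamLE {n : ℕ} (i : Fin n) (Γ' Γ : Params n) : Prop :=
  Γ'.icl = Γ.icl ∧ Γ'.ncl = Γ.ncl ∧
    Γ'.iss i ≤ Γ.iss i ∧ Γ'.isn i ≤ Γ.isn i ∧
    (∀ h, h ≠ i → Γ'.iss h = Γ.iss h) ∧ (∀ h, h ≠ i → Γ'.isn h = Γ.isn h)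

/-- Incentive compatibility (with respect to segment size and segment number). -/
def IncentiveCompatible (M : Mechanism) : Prop :=
  ∀ I : IKEP, ∀ i : Fin I.n, ∀ Γ' : Params I.n, ParamLE i Γ' I.prm →
    expUtil M { I with prm := Γ' } i ≤ expUtil M I i

/-- An international `Γ`-cycle of the instance `I`. -/
def IsIntlGammaCycle (I : IKEP) (l : List ℕ) : Prop :=
  IsGammaCycle I.G I.prm l ∧ IsInternational I.G l

/-- `c_int(I)`: the maximum length of an international `Γ`-cycle of `G`. -/
noncomputable def cInt (I : IKEP) : ℕ :=
  sSup {s | ∃ l, IsIntlGammaCycle I l ∧ l.length = s}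


/-- A nonempty mechanism: whenever the instance admits at least one `Γ`-cycle,
the empty packing is returned with probability `0`. -/
def NonemptyMech (M : Mechanism) : Prop :=
  ∀ I : IKEP, (∃ l, IsGammaCycle I.G I.prm l) → M.dist I ∅ = 0

/-!
Take three directed 8-cycles `petal 0`, `petal 1`, `petal 2` sharing a single hub vertex and
nothing else, so that every cycle is a petal and every packing has size at most 8. The countries
are chosen so that country `j` owns three vertices of `petal j`, each in a singleton segment, and a
segment of size 2 in each of the other two petals. With segment size bound 2 for everybody all
petals are admissible; if country `i` declares bound 1, only `petal i` survives and a nonempty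
mechanism must give country `i` utility 3. Incentive compatibility then gives each country expected
utility at least 3 under the truthful report, an expected welfare of 9 > 8.
-/

lemma cyc_eq_of_mod_eq {l : List ℕ} {a b : ℕ} (h : a % l.length = b % l.length) :
    cyc l a = cyc l b := by
  rw [cyc, cyc, h]

lemma cyc_of_lt {l : List ℕ} {k : ℕ} (hk : k < l.length) : cyc l k = l[k] := by
  rw [cyc, Nat.mod_eq_of_lt hk, List.getD_eq_getElem]

lemma cyc_mem {l : List ℕ} (hl : l ≠ []) (k : ℕ) : cyc l k ∈ l := by
  have hk := Nat.mod_lt k (List.length_pos_iff.mpr hl)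
  rw [← cyc_eq_of_mod_eq (Nat.mod_mod k l.length), cyc_of_lt hk]
  exact List.getElem_mem hk

lemma mod_eq_of_cyc_eq {l : List ℕ} (hnd : l.Nodup) (hl : l ≠ []) {a b : ℕ}
    (h : cyc l a = cyc l b) : a % l.length = b % l.length := by
  have hpos := List.length_pos_iff.mpr hl
  rw [cyc, cyc, List.getD_eq_getElem _ _ (Nat.mod_lt a hpos),
    List.getD_eq_getElem _ _ (Nat.mod_lt b hpos)] at h
  exact hnd.getElem_inj_iff.mp h

lemma cyc_rotate (l : List ℕ) (r k : ℕ) : cyc (l.rotate r) k = cyc l (r + k) := by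
  by_cases hl : l = []
  · simp [hl, cyc]
  have hpos := List.length_pos_iff.mpr hl
  rw [cyc, List.length_rotate, List.getD_eq_getElem _ _ (by simpa using Nat.mod_lt k hpos),
    List.getElem_rotate, ← cyc_of_lt (Nat.mod_lt _ hpos)]
  exact cyc_eq_of_mod_eq (by simp [Nat.add_comm])

namespace IsCycle

variable {n : ℕ} {G : PartGraph n} {l : List ℕ}

lemma ne_nil (hC : IsCycle G l) : l ≠ [] :=
  List.length_pos_iff.mp (by have := hC.1; omega)

lemma arc (hC : IsCycle G l) (k : ℕ) : (cyc l k, cyc l (k + 1)) ∈ G.arcs := by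
  have h := hC.2.2.2 (k % l.length) (Nat.mod_lt k (List.length_pos_iff.mpr hC.ne_nil))
  rwa [cyc_eq_of_mod_eq (Nat.mod_mod k l.length),
    cyc_eq_of_mod_eq (Nat.mod_add_mod k l.length 1)] at h

lemma rotate (hC : IsCycle G l) (r : ℕ) : IsCycle G (l.rotate r) := by
  refine ⟨by simpa using hC.1, (List.rotate_perm l r).nodup_iff.mpr hC.2.1,
    fun v hv => hC.2.2.1 v (List.mem_rotate.mp hv), fun k _ => ?_⟩
  rw [cyc_rotate, cyc_rotate, ← Nat.add_assoc]
  exact hC.arc (r + k)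

end IsCycle

lemma cyc_add_eq_of_unique_out {n : ℕ} {G : PartGraph n} {h : ℕ}
    (huniq : ∀ u w w', u ≠ h → (u, w) ∈ G.arcs → (u, w') ∈ G.arcs → w = w')
    {l p : List ℕ} (hl : IsCycle G l) (hp : IsCycle G p) {a b : ℕ}
    (hab : cyc l a = cyc p b) {m : ℕ} (hm : ∀ k < m, cyc p (b + k) ≠ h) :
    cyc l (a + m) = cyc p (b + m) := by
  induction m with
  | zero => exact hab
  | succ m ih =>
    have hlm := ih fun k hk => hm k (by omega)
    refine huniq _ _ _ (hlm ▸ hm m (by omega)) ?_ (hp.arc (b + m))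
    rw [← hlm]
    exact hl.arc (a + m)

lemma sum_cycUtil {n : ℕ} (G : PartGraph n) (l : List ℕ) :
    ∑ i, cycUtil G i l = l.length := by
  induction l with
  | nil => simp [cycUtil]
  | cons v l ih =>
    have hstep : ∀ i,
        cycUtil G i (v :: l) = (if G.country v = i then 1 else 0) + cycUtil G i l := by
      intro i
      by_cases hv : G.country v = i <;> simp [cycUtil, hv, Nat.add_comm]
    rw [Finset.sum_congr rfl fun i _ => hstep i, Finset.sum_add_distrib, ih,
      Finset.sum_ite_eq, if_pos (Finset.mem_univ _), List.length_cons, Nat.add_comm]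

lemma sum_packUtil {n : ℕ} (G : PartGraph n) (P : Finset (List ℕ)) :
    ∑ i, packUtil G i P = packSize P := by
  simp only [packUtil, packSize]
  rw [Finset.sum_comm]
  exact Finset.sum_congr rfl fun l _ => sum_cycUtil G l

lemma IsGammaCycle.two_le_iss {n : ℕ} {G : PartGraph n} {Γ : Params n} {l : List ℕ}
    (hΓ : IsGammaCycle G Γ l) {i : Fin n} {s : ℕ} (hs : G.country (cyc l s) = i)
    (hs1 : G.country (cyc l (s + 1)) = i) (hprev : G.country (cyc l (s + l.length - 1)) ≠ i) :
    2 ≤ Γ.iss i := by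
  have hne := hΓ.1.ne_nil
  have hL := hΓ.1.1
  have hintl : IsInternational G l := fun ⟨j, hj⟩ =>
    hprev ((hj _ (cyc_mem hne _)).trans (hs ▸ hj _ (cyc_mem hne s)).symm)
  rcases hΓ.2 with ⟨j, hj, -⟩ | ⟨-, -, hiss, -⟩
  · exact absurd ⟨j, hj⟩ hintl
  have hshift : ∀ m, cyc l (s % l.length + m) = cyc l (s + m) := fun m =>
    cyc_eq_of_mod_eq ((Nat.mod_modEq s _).add_right m)
  have hseg : segStart G l i (s % l.length) := by
    refine ⟨by rwa [← Nat.add_zero (s % l.length), hshift], ?_⟩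
    rwa [Nat.add_sub_assoc (by omega), hshift, ← Nat.add_sub_assoc (by omega)]
  have hrun : 2 ≤ runLen G l i (s % l.length) := by
    have hsub : ({0, 1} : Finset ℕ) ⊆ (Finset.range l.length).filter
        fun j => ∀ j' ≤ j, G.country (cyc l (s % l.length + j')) = i := by
      intro j hj
      simp only [Finset.mem_insert, Finset.mem_singleton] at hj
      refine Finset.mem_filter.mpr ⟨Finset.mem_range.mpr (by omega), fun j' hj' => ?_⟩
      obtain rfl | rfl : j' = 0 ∨ j' = 1 := by omega
      exacts [by rwa [hshift, Nat.add_zero], by rwa [hshift]]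
    exact Finset.card_le_card hsub
  calc (2 : ℕ∞) ≤ runLen G l i (s % l.length) := by exact_mod_cast hrun
    _ ≤ Γ.iss i := hiss i _ (Nat.mod_lt s (by omega)) hseg

namespace Mechanism

variable (M : Mechanism) (I : IKEP)

lemma le_sum_dist_mul {f : Finset (List ℕ) → ℝ} {c : ℝ}
    (h : ∀ P, M.dist I P ≠ 0 → c ≤ f P) :
    c ≤ (M.dist I).sum fun P p => p * f P :=
  calc c = (M.dist I).sum fun _ p => p * c := by rw [← Finsupp.sum_mul, M.sum_one, one_mul]
    _ ≤ _ := Finset.sum_le_sum fun P hP =>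
      mul_le_mul_of_nonneg_left (h P (Finsupp.mem_support_iff.mp hP)) (M.nonneg I P)

lemma sum_dist_mul_le {f : Finset (List ℕ) → ℝ} {c : ℝ}
    (h : ∀ P, M.dist I P ≠ 0 → f P ≤ c) :
    ((M.dist I).sum fun P p => p * f P) ≤ c :=
  calc _ ≤ (M.dist I).sum fun _ p => p * c := Finset.sum_le_sum fun P hP =>
        mul_le_mul_of_nonneg_left (h P (Finsupp.mem_support_iff.mp hP)) (M.nonneg I P)
    _ = c := by rw [← Finsupp.sum_mul, M.sum_one, one_mul]

lemma sum_expUtil : ∑ i, expUtil M I i = sw M I := by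
  simp only [expUtil, sw, Finsupp.sum]
  rw [Finset.sum_comm]
  refine Finset.sum_congr rfl fun P _ => ?_
  rw [← Finset.mul_sum, ← Nat.cast_sum, sum_packUtil]

lemma sw_le {b : ℕ} (h : ∀ P, IsGammaPacking I P → packSize P ≤ b) : sw M I ≤ b :=
  M.sum_dist_mul_le I fun P hP => by exact_mod_cast h P (M.supp I P hP)

lemma le_expUtil_of_nonemptyMech (hne : NonemptyMech M) (hcyc : ∃ l, IsGammaCycle I.G I.prm l)
    {i : Fin I.n} {c : ℕ} (h : ∀ l, IsGammaCycle I.G I.prm l → c ≤ cycUtil I.G i l) :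
    (c : ℝ) ≤ expUtil M I i := by
  refine M.le_sum_dist_mul I fun P hP => ?_
  obtain ⟨l, hl⟩ : P.Nonempty :=
    Finset.nonempty_iff_ne_empty.mpr fun h0 => hP (h0 ▸ hne I hcyc)
  exact_mod_cast (h l ((M.supp I P hP).2 l hl)).trans
    (Finset.single_le_sum (fun _ _ => Nat.zero_le _) hl)

end Mechanism

namespace Flower

def petal : Fin 3 → List ℕ
  | 0 => [0, 1, 4, 3, 2, 5, 6, 7]
  | 1 => [0, 9, 10, 11, 14, 13, 17, 16]
  | 2 => [0, 12, 20, 19, 22, 23, 25, 26]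

def arcs : Finset (ℕ × ℕ) :=
  {(0, 1), (1, 4), (4, 3), (3, 2), (2, 5), (5, 6), (6, 7), (7, 0),
   (0, 9), (9, 10), (10, 11), (11, 14), (14, 13), (13, 17), (17, 16), (16, 0),
   (0, 12), (12, 20), (20, 19), (19, 22), (22, 23), (23, 25), (25, 26), (26, 0)}

lemma fst_ne_snd_of_mem_arcs : ∀ p ∈ arcs, p.1 ≠ p.2 := by decide

def graph : PartGraph 3 where
  verts := {0, 1, 2, 3, 4, 5, 6, 7, 9, 10, 11, 12, 13, 14, 16, 17, 19, 20, 22, 23, 25, 26}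
  arcs := arcs
  arcs_mem := by decide
  no_loops v hv := fst_ne_snd_of_mem_arcs _ hv rfl
  country v := ⟨v % 3, Nat.mod_lt v (by norm_num)⟩
  country_nonempty := by decide

lemma length_petal (j : Fin 3) : (petal j).length = 8 := by fin_cases j <;> rfl

lemma petal_isCycle (j : Fin 3) : IsCycle graph (petal j) := by
  unfold IsCycle; fin_cases j <;> decide

lemma cyc_petal_zero (j : Fin 3) : cyc (petal j) 0 = 0 := by fin_cases j <;> rfl

lemma cyc_petal_eight (j : Fin 3) : cyc (petal j) 8 = 0 := by fin_cases j <;> rfl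

lemma cyc_petal_ne_zero (j : Fin 3) {k : ℕ} (hk : 1 ≤ k) (hk8 : k < 8) : cyc (petal j) k ≠ 0 := by
  have h : ∀ j, ∀ k < 8, 1 ≤ k → cyc (petal j) k ≠ 0 := by decide
  exact h j k hk8 hk

lemma exists_cyc_petal_eq (v : ℕ) (hv : v ∈ graph.verts) : ∃ j, ∃ k < 8, cyc (petal j) k = v := by
  revert v; decide

lemma exists_cyc_petal_one_eq {w : ℕ} (hw : (0, w) ∈ graph.arcs) : ∃ j, cyc (petal j) 1 = w := by
  have h : ∀ p ∈ arcs, p.1 = 0 → ∃ j, cyc (petal j) 1 = p.2 := by decide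
  exact h _ hw rfl

lemma eq_of_mem_arcs (u w w' : ℕ) (hu : u ≠ 0) (hw : (u, w) ∈ graph.arcs)
    (hw' : (u, w') ∈ graph.arcs) : w = w' := by
  have h : ∀ p ∈ arcs, ∀ q ∈ arcs, p.1 = q.1 → p.1 ≠ 0 → p.2 = q.2 := by decide
  exact h _ hw _ hw' rfl hu

lemma zero_mem_of_isCycle {l : List ℕ} (hC : IsCycle graph l) : 0 ∈ l := by
  obtain ⟨j, k, hk, hv⟩ := exists_cyc_petal_eq _ (hC.2.2.1 _ (cyc_mem hC.ne_nil 0))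
  rcases Nat.eq_zero_or_pos k with rfl | hkpos
  · exact cyc_petal_zero j ▸ hv ▸ cyc_mem hC.ne_nil 0
  have hwalk := cyc_add_eq_of_unique_out (m := 8 - k) eq_of_mem_arcs hC (petal_isCycle j) hv.symm
    fun k' hk' => cyc_petal_ne_zero j (by omega) (by omega)
  rw [Nat.add_sub_cancel' hk.le, cyc_petal_eight] at hwalk
  exact hwalk ▸ cyc_mem hC.ne_nil _

lemma eq_petal_of_isCycle {l : List ℕ} (hC : IsCycle graph l) (h0 : cyc l 0 = 0) :
    ∃ j, l = petal j := by
  obtain ⟨j, hj⟩ := exists_cyc_petal_one_eq (h0 ▸ hC.arc 0)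
  have hagree : ∀ k ≤ 8, cyc l k = cyc (petal j) k := by
    rintro (_ | k) hk
    · rw [h0, cyc_petal_zero]
    have hwalk := cyc_add_eq_of_unique_out (m := k) eq_of_mem_arcs hC (petal_isCycle j) hj.symm
      fun k' hk' => cyc_petal_ne_zero j (by omega) (by omega)
    rwa [Nat.add_comm] at hwalk
  have hL := hC.1
  have hlen : l.length = 8 := by
    by_contra hne
    rcases Nat.lt_or_gt_of_ne hne with hlt | hgt
    · refine cyc_petal_ne_zero j (k := l.length) (by omega) hlt ?_
      rw [← hagree _ hlt.le, cyc_eq_of_mod_eq (b := 0) (by simp), h0]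
    · have h8 := mod_eq_of_cyc_eq hC.2.1 hC.ne_nil
        ((hagree 8 le_rfl).trans ((cyc_petal_eight j).trans h0.symm))
      rw [Nat.mod_eq_of_lt hgt, Nat.zero_mod] at h8
      omega
  refine ⟨j, List.ext_getElem (hlen.trans (length_petal j).symm) fun k hk hk' => ?_⟩
  rw [← cyc_of_lt hk, ← cyc_of_lt hk', hagree k (by omega)]

lemma isRotated_petal_of_isCycle {l : List ℕ} (hC : IsCycle graph l) : ∃ j, l ~r petal j := by
  obtain ⟨t, ht, h0⟩ := List.getElem_of_mem (zero_mem_of_isCycle hC)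
  obtain ⟨j, hj⟩ := eq_petal_of_isCycle (hC.rotate t)
    (by rw [cyc_rotate, Nat.add_zero, cyc_of_lt ht, h0])
  exact ⟨j, t, hj⟩

lemma length_eq_of_isCycle {l : List ℕ} (hC : IsCycle graph l) : l.length = 8 := by
  obtain ⟨j, hj⟩ := isRotated_petal_of_isCycle hC
  rw [hj.perm.length_eq, length_petal]

lemma packSize_le {P : Finset (List ℕ)} (hP : IsPacking graph P) : packSize P ≤ 8 := by
  have hcard : P.card ≤ 1 := Finset.card_le_one.mpr fun l hl l' hl' => by
    by_contra hne
    exact hP.2 l hl l' hl' hne 0 (zero_mem_of_isCycle (hP.1 l hl))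
      (zero_mem_of_isCycle (hP.1 l' hl'))
  calc packSize P = ∑ l ∈ P, 8 :=
        Finset.sum_congr rfl fun l hl => length_eq_of_isCycle (hP.1 l hl)
    _ ≤ 8 := by rw [Finset.sum_const, smul_eq_mul]; omega

def truthful : Params 3 where
  icl := ⊤
  ncl _ := ⊤
  iss _ := 2
  isn _ := ⊤
  icl_ne_one := by decide
  ncl_ne_one := by decide
  iss_pos := by decide
  isn_pos := by decide

def misreport (i : Fin 3) : Params 3 :=
  { truthful with
    iss := Function.update truthful.iss i 1
    iss_pos := by
      intro h
      rcases eq_or_ne h i with rfl | hne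
      · simp
      · simp [Function.update_of_ne hne, truthful] }

lemma misreport_paramLE (i : Fin 3) : ParamLE i (misreport i) truthful := by
  refine ⟨rfl, rfl, ?_, le_rfl, fun h hh => Function.update_of_ne hh _ _, fun _ _ => rfl⟩
  simp [misreport, truthful]

lemma petal_isGammaCycle_misreport (i : Fin 3) : IsGammaCycle graph (misreport i) (petal i) := by
  refine ⟨petal_isCycle i, Or.inr ⟨?_, le_top, ?_, fun _ => le_top⟩⟩
  · unfold IsInternational IsNational IsNationalTo; revert i; decide
  · unfold segStart; revert i; decide

lemma cycUtil_of_isGammaCycle_misreport {i : Fin 3} {l : List ℕ}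
    (hl : IsGammaCycle graph (misreport i) l) : cycUtil graph i l = 3 := by
  obtain ⟨j, r, hr⟩ := isRotated_petal_of_isCycle hl.1
  by_cases hji : j = i
  · subst hji
    have h3 : ∀ j, cycUtil graph j (petal j) = 3 := by decide
    rw [cycUtil, ((List.IsRotated.perm ⟨r, hr⟩).filter _).length_eq]
    exact h3 j
  · exfalso
    have hseg : ∀ i j, j ≠ i → ∃ s < 8, graph.country (cyc (petal j) s) = i ∧
        graph.country (cyc (petal j) (s + 1)) = i ∧
        graph.country (cyc (petal j) (s + 7)) ≠ i := by
      decide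
    obtain ⟨s, -, hs, hs1, hprev⟩ := hseg i j hji
    simp only [← hr, cyc_rotate, ← Nat.add_assoc] at hs hs1 hprev
    have h2 := hl.two_le_iss hs hs1
      (by rwa [length_eq_of_isCycle hl.1, show r + s + 8 - 1 = r + s + 7 by omega])
    simp [misreport] at h2

def truthfulInstance : IKEP := ⟨3, by norm_num, graph, truthful⟩

end Flower

/-- There is no mechanism that is both nonempty and incentive
compatible. -/
theorem no_nonempty_and_IC (M : Mechanism) (hne : NonemptyMech M) :
    ¬ IncentiveCompatible M := by
  intro hic
  have hutil : ∀ i : Fin 3, ((3 : ℕ) : ℝ) ≤ expUtil M Flower.truthfulInstance i := fun i =>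
    (M.le_expUtil_of_nonemptyMech { Flower.truthfulInstance with prm := Flower.misreport i } hne
        ⟨Flower.petal i, Flower.petal_isGammaCycle_misreport i⟩
        fun _ hl => (Flower.cycUtil_of_isGammaCycle_misreport hl).ge).trans
      (hic Flower.truthfulInstance i (Flower.misreport i) (Flower.misreport_paramLE i))
  have hsw : sw M Flower.truthfulInstance ≤ (8 : ℕ) :=
    M.sw_le _ fun _ hP => Flower.packSize_le hP.1
  have h9 : ∑ _i : Fin 3, ((3 : ℕ) : ℝ) ≤ sw M Flower.truthfulInstance :=
    M.sum_expUtil Flower.truthfulInstance ▸ Finset.sum_le_sum fun i _ => hutil i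
  norm_num at hsw h9
  linarith
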